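/- Let E, E' be subspaces of a Banach space B, both of finite dimension k, and let F be a closed complement to E with |π_{E⊕F}| ≤ √k. Suppose d_H(E, E') ≤ 1/(2√k). Then: (a) B = E' ⊕ F, with |π_{E'⊕F}| ≤ 2√k and |π_{F⊕E'}|_E| ≤ 4√k · d_H(E, E'); and (b) for any e ∈ E with |e| = 1, one has 1 − 4√k · d_H(E, E') ≤ |π_{E'⊕F} e| ≤ 1 + 4√k · d_H(E, E'). -/

import Mathlib

/-!
Every unit vector `v ∈ E'` lies within `d_H(E, E')` of a unit vector `e ∈ E`, and
`π_{E⊕F} e = e`, so `|π_{E⊕F} v| ≥ 1 - √k d_H(E, E') ≥ 1/2`. Hence `π_{E⊕F}` maps `E'`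
injectively, and by equality of dimensions bijectively, onto `E`, which gives `B = E' ⊕ F`.
Since `π_{E⊕F} ∘ π_{E'⊕F} = π_{E⊕F}`, the lower bound on `E'` yields
`|π_{E'⊕F}| ≤ 2 |π_{E⊕F}|`. Finally, for `e ∈ E` and a nearby `e' ∈ E'`,
`π_{F⊕E'} e = π_{F⊕E'} (e - e')` has norm at most `(1 + 2√k) |e - e'|`; part (b) is the
triangle inequality for `e = π_{E'⊕F} e + π_{F⊕E'} e`.
-/

open MeasureTheory Filter Metric Module Submodule Set

noncomputable section

namespace BY

variable {B B' : Type*}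

/-- The unit sphere of a subspace `E`. -/
def subSphere [NormedAddCommGroup B] [NormedSpace ℝ B] (E : Submodule ℝ B) : Set B :=
  {v : B | v ∈ E ∧ ‖v‖ = 1}

/-- `d_H(E, E')`: the Hausdorff distance between the unit spheres of `E` and `E'`. -/
def dH [NormedAddCommGroup B] [NormedSpace ℝ B] (E E' : Submodule ℝ B) : ℝ :=
  Metric.hausdorffDist (subSphere E) (subSphere E')

/-- The supremum of `‖π x‖` over `x ∈ S`, where `π` is the projection onto `E` along `F`. -/
def projNormOn [NormedAddCommGroup B] [NormedSpace ℝ B] (E F : Submodule ℝ B)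
    (h : IsCompl E F) (S : Set B) : ℝ :=
  sSup ((fun x => ‖(E.linearProjOfIsCompl F h x : B)‖) '' S)

/-- `|π_{E⊕F}|`: the operator norm of the projection onto `E` along `F`. -/
def projNorm [NormedAddCommGroup B] [NormedSpace ℝ B] (E F : Submodule ℝ B)
    (h : IsCompl E F) : ℝ :=
  projNormOn E F h (Metric.closedBall 0 1)

/-- `α(E, F) = inf { ‖e - f‖ : e ∈ E, ‖e‖ = 1, f ∈ F }`. -/
def alphaAngle [NormedAddCommGroup B] [NormedSpace ℝ B] (E F : Submodule ℝ B) : ℝ :=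
  sInf {r : ℝ | ∃ e ∈ E, ∃ f ∈ F, ‖e‖ = 1 ∧ r = ‖e - f‖}

/-- `ω_k`: the volume of the Euclidean unit ball in `ℝ^k`. -/
def euclideanBallVol (k : ℕ) : ENNReal :=
  volume (Metric.closedBall (0 : EuclideanSpace ℝ (Fin k)) 1)

/-- `μ` is the induced volume `m_E` on the `k`-dimensional subspace `E`: the (unique) Haar
measure on `E` assigning mass `ω_k` to the unit ball of `E`. -/
def IsInducedVolume [NormedAddCommGroup B] [NormedSpace ℝ B] [MeasurableSpace B]
    (E : Submodule ℝ B) (k : ℕ) (μ : Measure E) : Prop :=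
  Measure.IsAddHaarMeasure μ ∧ μ {v : E | ‖v‖ ≤ 1} = euclideanBallVol k

/-- `det(A|E)`, computed with respect to induced volumes `μE` on `E` and `μF` on a
subspace `F` containing `A(E)`: the ratio `μF(A(B_E)) / μE(B_E)` where `B_E` is
the unit ball of `E`. -/
def detIn [NormedAddCommGroup B] [NormedSpace ℝ B] [NormedAddCommGroup B'] [NormedSpace ℝ B']
    [MeasurableSpace B] [MeasurableSpace B']
    (A : B →L[ℝ] B') (E : Submodule ℝ B) (F : Submodule ℝ B')
    (μE : Measure E) (μF : Measure F) : ℝ :=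
  (μF {w : F | ∃ v : B, v ∈ E ∧ ‖v‖ ≤ 1 ∧ A v = (w : B')}).toReal /
    (μE {v : E | ‖v‖ ≤ 1}).toReal

/-- `P[v₁, …, v_k]`: the parallelepiped spanned by the vectors `v i`. -/
def pped [AddCommGroup B] [Module ℝ B] {k : ℕ} (v : Fin k → B) : Set B :=
  {x : B | ∃ a : Fin k → ℝ, (∀ i, a i ∈ Set.Icc (0 : ℝ) 1) ∧ x = ∑ i, a i • v i}

/-- `N[v₁, …, v_k]`: the sum of the norms of the projections, within the span of the `v i`,
onto each `⟨v i⟩` along the span of the other basis vectors. -/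
def Nquan [NormedAddCommGroup B] [NormedSpace ℝ B] {k : ℕ} (v : Fin k → B) : ℝ :=
  ∑ i, sSup {r : ℝ | ∃ a : Fin k → ℝ, ‖∑ j, a j • v j‖ ≤ 1 ∧ r = ‖a i • v i‖}

/-- The operator norm of the restriction of `A` to the subspace `E`. -/
def opNormOnSub [NormedAddCommGroup B] [NormedSpace ℝ B] [NormedAddCommGroup B']
    [NormedSpace ℝ B'] (A : B →L[ℝ] B') (E : Submodule ℝ B) : ℝ :=
  sSup {r : ℝ | ∃ v ∈ E, ‖v‖ ≤ 1 ∧ r = ‖A v‖}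

/-- The `n`-th iterate (`n ∈ ℤ`) of the invertible pair `(f, g)`, `g = f⁻¹`. -/
def zIter {X : Type*} (f g : X → X) (n : ℤ) (x : X) : X :=
  if 0 ≤ n then f^[n.toNat] x else g^[(-n).toNat] x

/-- `ψ'(x) = sup_{n ∈ ℤ} e^{-|n| δ} ψ(f^n x)`. -/
def psiSup {X : Type*} (f g : X → X) (ψ : X → ℝ) (δ : ℝ) (x : X) : ℝ :=
  sSup (Set.range fun n : ℤ => Real.exp (-|(n : ℝ)| * δ) * ψ (zIter f g n x))

/-- The cocycle `T^n_x = T_{f^{n-1} x} ∘ ⋯ ∘ T_x`. -/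
def cocycle {X : Type*} [NormedAddCommGroup B] [NormedSpace ℝ B]
    (f : X → X) (T : X → B →L[ℝ] B) : ℕ → X → B →L[ℝ] B
  | 0, _ => ContinuousLinearMap.id ℝ B
  | n + 1, x => (cocycle f T n (f x)).comp (T x)

end BY

end

namespace BY

section Algebra

variable {K V : Type*} [DivisionRing K] [AddCommGroup V] [Module K V] {E E' F : Submodule K V}

theorem projection_projection_of_isCompl (h : IsCompl E F) (h' : IsCompl E' F) (x : V) :
    E.projection F h (E'.projection F h' x) = E.projection F h x := by
  have hF : x - E'.projection F h' x ∈ F := by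
    rw [← projection_eq_self_sub_projection h']
    exact projection_apply_mem _ _
  rw [← sub_eq_zero, ← map_sub, projection_apply_eq_zero_iff, ← neg_mem_iff, neg_sub]
  exact hF

theorem isCompl_of_disjoint_of_finrank_eq [FiniteDimensional K E] [FiniteDimensional K E']
    (h : IsCompl E F) (hdim : Module.finrank K E' = Module.finrank K E)
    (hdisj : Disjoint E' F) : IsCompl E' F := by
  set q : E' →ₗ[K] E := E.projectionOnto F h ∘ₗ E'.subtype
  have hq : Function.Injective q := by
    rw [← LinearMap.ker_eq_bot, LinearMap.ker_comp, ker_projectionOnto,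
      ← disjoint_iff_comap_eq_bot]
    exact hdisj
  let qe : E' ≃ₗ[K] E := LinearEquiv.ofBijective q
    ⟨hq, (LinearMap.injective_iff_surjective_of_finrank_eq_finrank hdim).mp hq⟩
  have hcompl := LinearMap.isCompl_of_proj (f := qe.symm.toLinearMap ∘ₗ E.projectionOnto F h)
    fun x => qe.symm_apply_eq.mpr rfl
  rwa [LinearEquiv.ker_comp, ker_projectionOnto] at hcompl

end Algebra

variable {B : Type*} [NormedAddCommGroup B] [NormedSpace ℝ B] {E E' F : Submodule ℝ B}

section Sphere

theorem isCompact_subSphere (E : Submodule ℝ B) [FiniteDimensional ℝ E] :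
    IsCompact (subSphere E) := by
  have : subSphere E = Subtype.val '' sphere (0 : E) 1 := by
    ext v
    simp [subSphere, and_comm]
  rw [this]
  exact (isCompact_sphere 0 1).image continuous_subtype_val

theorem isBounded_subSphere (E : Submodule ℝ B) : Bornology.IsBounded (subSphere E) :=
  isBounded_sphere (x := (0 : B)) (r := 1) |>.subset fun _ hv => by simp [hv.2]

theorem subSphere_nonempty (hE : E ≠ ⊥) : (subSphere E).Nonempty := by
  obtain ⟨v, hvE, hv0⟩ := exists_mem_ne_zero_of_ne_bot hE
  exact ⟨‖v‖⁻¹ • v, E.smul_mem _ hvE, norm_smul_inv_norm hv0⟩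

theorem dH_comm (E E' : Submodule ℝ B) : dH E E' = dH E' E :=
  hausdorffDist_comm

theorem exists_mem_subSphere_norm_sub_le_dH [FiniteDimensional ℝ E'] (hE' : E' ≠ ⊥) {u : B}
    (hu : u ∈ subSphere E) : ∃ u' ∈ subSphere E', ‖u - u'‖ ≤ dH E E' := by
  have hfin : hausdorffEDist (subSphere E) (subSphere E') ≠ ⊤ :=
    hausdorffEDist_ne_top_of_nonempty_of_bounded ⟨u, hu⟩ (subSphere_nonempty hE')
      (isBounded_subSphere E) (isBounded_subSphere E')
  obtain ⟨u', hu', hdist⟩ :=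
    (isCompact_subSphere E').exists_infDist_eq_dist (subSphere_nonempty hE') u
  exact ⟨u', hu', dist_eq_norm u u' ▸ hdist ▸ infDist_le_hausdorffDist_of_mem hu hfin⟩

theorem exists_norm_eq_norm_sub_le_dH_mul [FiniteDimensional ℝ E'] (hE' : E' ≠ ⊥) {v : B}
    (hv : v ∈ E) : ∃ v' ∈ E', ‖v'‖ = ‖v‖ ∧ ‖v - v'‖ ≤ dH E E' * ‖v‖ := by
  rcases eq_or_ne v 0 with rfl | hv0
  · exact ⟨0, E'.zero_mem, by simp⟩
  obtain ⟨u', ⟨hu'E', hu'⟩, hdist⟩ := exists_mem_subSphere_norm_sub_le_dH hE'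
    ⟨E.smul_mem ‖v‖⁻¹ hv, norm_smul_inv_norm hv0⟩
  refine ⟨‖v‖ • u', E'.smul_mem _ hu'E', by simp [norm_smul, hu'], ?_⟩
  calc ‖v - ‖v‖ • u'‖ = ‖‖v‖ • (‖v‖⁻¹ • v - u')‖ := by
        rw [smul_sub, smul_inv_smul₀ (norm_ne_zero_iff.mpr hv0)]
    _ = ‖v‖ * ‖‖v‖⁻¹ • v - u'‖ := by rw [norm_smul, norm_norm]
    _ ≤ ‖v‖ * dH E E' := by gcongr
    _ = dH E E' * ‖v‖ := mul_comm _ _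

end Sphere

section Projection

theorem projNorm_eq_norm_projectionL (h : IsTopCompl E F) :
    projNorm E F h.isCompl = ‖E.projectionL F h‖ :=
  (E.projectionL F h).sSup_unitClosedBall_eq_norm

theorem norm_projection_le_projNorm_mul (h : IsTopCompl E F) (x : B) :
    ‖E.projection F h.isCompl x‖ ≤ projNorm E F h.isCompl * ‖x‖ :=
  projNorm_eq_norm_projectionL h ▸ (E.projectionL F h).le_opNorm x

theorem projNormOn_le (h : IsCompl E F) {S : Set B} {c : ℝ} (hc : 0 ≤ c)
    (hS : ∀ x ∈ S, ‖x‖ ≤ 1) (hP : ∀ x ∈ S, ‖E.projection F h x‖ ≤ c * ‖x‖) :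
    projNormOn E F h S ≤ c := by
  refine Real.sSup_le ?_ hc
  rintro _ ⟨x, hx, rfl⟩
  exact (hP x hx).trans (mul_le_of_le_one_right hc (hS x hx))

theorem one_sub_mul_mul_norm_le_norm_projection (h : IsCompl E F) {C d : ℝ} (hC : 0 ≤ C)
    (hP : ∀ x, ‖E.projection F h x‖ ≤ C * ‖x‖)
    (hnear : ∀ v ∈ E', ∃ e ∈ E, ‖e‖ = ‖v‖ ∧ ‖v - e‖ ≤ d * ‖v‖) {v : B} (hv : v ∈ E') :
    (1 - C * d) * ‖v‖ ≤ ‖E.projection F h v‖ := by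
  obtain ⟨e, heE, hev, hve⟩ := hnear v hv
  have hsplit : E.projection F h v = e + E.projection F h (v - e) := by
    rw [map_sub, projection_apply_left h ⟨e, heE⟩]
    abel
  calc (1 - C * d) * ‖v‖ = ‖e‖ - C * (d * ‖v‖) := by rw [hev]; ring
    _ ≤ ‖e‖ - ‖E.projection F h (v - e)‖ := by gcongr; exact (hP _).trans (by gcongr)
    _ ≤ ‖E.projection F h v‖ := hsplit ▸ norm_sub_le_norm_add _ _

theorem disjoint_of_mul_norm_le_norm_projection (h : IsCompl E F) {c : ℝ} (hc : 0 < c)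
    (hlow : ∀ v ∈ E', c * ‖v‖ ≤ ‖E.projection F h v‖) : Disjoint E' F := by
  rw [disjoint_def]
  intro v hvE' hvF
  have hv := hlow v hvE'
  rw [(projection_apply_eq_zero_iff h).mpr hvF, norm_zero] at hv
  exact norm_le_zero_iff.mp (nonpos_of_mul_nonpos_right hv hc)

theorem mul_norm_projection_le_norm_projection (h : IsCompl E F) (h' : IsCompl E' F) {c : ℝ}
    (hlow : ∀ v ∈ E', c * ‖v‖ ≤ ‖E.projection F h v‖) (x : B) :
    c * ‖E'.projection F h' x‖ ≤ ‖E.projection F h x‖ :=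
  projection_projection_of_isCompl h h' x ▸ hlow _ (projection_apply_mem h' x)

theorem norm_projection_symm_le (h' : IsCompl E' F) {C : ℝ}
    (hP' : ∀ x, ‖E'.projection F h' x‖ ≤ C * ‖x‖) (x : B) {x' : B} (hx' : x' ∈ E') :
    ‖F.projection E' h'.symm x‖ ≤ (1 + C) * ‖x - x'‖ := by
  have hsplit : F.projection E' h'.symm x = (x - x') - E'.projection F h' (x - x') := by
    rw [← projection_eq_self_sub_projection h', map_sub,
      (projection_apply_eq_zero_iff h'.symm).mpr hx', sub_zero]
  rw [hsplit, add_mul, one_mul]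
  exact (norm_sub_le _ _).trans (by gcongr; exact hP' _)

theorem abs_norm_projection_sub_norm_le (h' : IsCompl E' F) (x : B) :
    |‖E'.projection F h' x‖ - ‖x‖| ≤ ‖F.projection E' h'.symm x‖ := by
  rw [projection_eq_self_sub_projection h', norm_sub_rev]
  exact abs_norm_sub_norm_le _ _

end Projection

end BY

/-- Lemma 2.5 of the paper. Let `E, E'` be `k`-dimensional subspaces of a
Banach space `B` and `F` a closed complement of `E` with `|π_{E⊕F}| ≤ √k`. If
`d_H(E, E') ≤ 1/(2√k)`, then (a) `B = E' ⊕ F` with `|π_{E'⊕F}| ≤ 2√k` and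
`|π_{F⊕E'}|_E| ≤ 4√k d_H(E, E')`, and (b) for every unit vector `e ∈ E`,
`1 - 4√k d_H(E,E') ≤ |π_{E'⊕F} e| ≤ 1 + 4√k d_H(E,E')`. -/
theorem statement2 {B : Type*} [NormedAddCommGroup B] [NormedSpace ℝ B] [CompleteSpace B]
    (k : ℕ) (hk : 1 ≤ k) (E E' F : Submodule ℝ B)
    [FiniteDimensional ℝ E] [FiniteDimensional ℝ E']
    (hEk : Module.finrank ℝ E = k) (hE'k : Module.finrank ℝ E' = k)
    (hFc : IsClosed (F : Set B)) (h : IsCompl E F)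
    (hproj : BY.projNorm E F h ≤ Real.sqrt k)
    (hd : BY.dH E E' ≤ 1 / (2 * Real.sqrt k)) :
    ∃ h' : IsCompl E' F,
      BY.projNorm E' F h' ≤ 2 * Real.sqrt k ∧
      BY.projNormOn F E' h'.symm {v : B | v ∈ E ∧ ‖v‖ ≤ 1} ≤ 4 * Real.sqrt k * BY.dH E E' ∧
      ∀ e ∈ E, ‖e‖ = 1 →
        1 - 4 * Real.sqrt k * BY.dH E E' ≤ ‖(E'.linearProjOfIsCompl F h' e : B)‖ ∧
        ‖(E'.linearProjOfIsCompl F h' e : B)‖ ≤ 1 + 4 * Real.sqrt k * BY.dH E E' := by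
  set C := Real.sqrt k
  set d := BY.dH E E'
  have hC : 1 ≤ C := Real.one_le_sqrt.mpr (by exact_mod_cast hk)
  have hCd : C * d ≤ 1 / 2 := by
    calc C * d ≤ C * (1 / (2 * C)) := by gcongr
      _ = 1 / 2 := by field_simp
  have hE : E ≠ ⊥ := Submodule.finrank_eq_zero.not.mp (by omega)
  have hE' : E' ≠ ⊥ := Submodule.finrank_eq_zero.not.mp (by omega)
  have hT : IsTopCompl E F := h.isTopCompl_of_isClosed E.closed_of_finiteDimensional hFc
  have hP (x : B) : ‖E.projection F h x‖ ≤ C * ‖x‖ :=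
    (BY.norm_projection_le_projNorm_mul hT x).trans (by gcongr)
  have hlow (v : B) (hv : v ∈ E') : 1 / 2 * ‖v‖ ≤ ‖E.projection F h v‖ :=
    le_trans (by gcongr; linarith) (BY.one_sub_mul_mul_norm_le_norm_projection h (by positivity) hP
      (fun v hv => BY.dH_comm E E' ▸ BY.exists_norm_eq_norm_sub_le_dH_mul hE hv) hv)
  have h' : IsCompl E' F := BY.isCompl_of_disjoint_of_finrank_eq h (hE'k.trans hEk.symm)
    (BY.disjoint_of_mul_norm_le_norm_projection h (by norm_num) hlow)
  have hP' (x : B) : ‖E'.projection F h' x‖ ≤ 2 * C * ‖x‖ := by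
    linarith [BY.mul_norm_projection_le_norm_projection h h' hlow x, hP x]
  have hQ (e : B) (he : e ∈ E) : ‖F.projection E' h'.symm e‖ ≤ 4 * C * d * ‖e‖ := by
    obtain ⟨e', he', -, hdist⟩ := BY.exists_norm_eq_norm_sub_le_dH_mul hE' he
    calc ‖F.projection E' h'.symm e‖ ≤ (1 + 2 * C) * ‖e - e'‖ :=
          BY.norm_projection_symm_le h' hP' e he'
      _ ≤ 4 * C * (d * ‖e‖) := by gcongr; linarith
      _ = 4 * C * d * ‖e‖ := by ring
  have hd0 : 0 ≤ d := hausdorffDist_nonneg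
  refine ⟨h', ?_, ?_, fun e he he1 => ?_⟩
  · exact BY.projNormOn_le h' (by positivity) (fun x hx => by simpa using hx) fun x _ => hP' x
  · exact BY.projNormOn_le h'.symm (by positivity) (fun x hx => hx.2) fun x hx => hQ x hx.1
  · have hb := (BY.abs_norm_projection_sub_norm_le h' e).trans (hQ e he)
    rw [he1, mul_one, abs_le] at hb
    show 1 - _ ≤ ‖E'.projection F h' e‖ ∧ ‖E'.projection F h' e‖ ≤ _
    constructor <;> linarith
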